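/- Let f ∈ ℍ[X] with deg f ≥ 1 and let f′ be its formal derivative. If λ ∈ ℍ \ ℝ is a spherical root of f′ (a spherical critical point of f), then λ lies in the convex hull (taken in the real normed space ℍ ≅ ℝ⁴) of the set {r ∈ ℍ | eval r C_f = 0} of roots of the companion polynomial of f. -/

import Mathlib

open Polynomial

/-- A spherical root of `f ∈ ℍ[X]`: a non-real `λ` such that every root of the
characteristic polynomial `p_λ(x) = x² − tr(λ)x + n(λ)` of `λ` is a root of `f`. -/
def SphericalRoot (f : Polynomial (Quaternion ℝ)) (lam : Quaternion ℝ) : Prop :=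
  lam ∉ Set.range (algebraMap ℝ (Quaternion ℝ)) ∧
    ∀ r : Quaternion ℝ,
      r ^ 2 - (2 * lam.re) • r + ((Quaternion.normSq lam : ℝ) : Quaternion ℝ) = 0 →
        Polynomial.eval r f = 0

/-- The conjugate polynomial `conj(f) = ∑ₖ (star aₖ) Xᵏ`. -/
noncomputable def polyConj (f : Polynomial (Quaternion ℝ)) : Polynomial (Quaternion ℝ) :=
  f.sum fun k a => C (star a) * X ^ k

/-- The companion polynomial `C_f = conj(f) · f`. -/
noncomputable def companion (f : Polynomial (Quaternion ℝ)) : Polynomial (Quaternion ℝ) :=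
  polyConj f * f

/-!
Let `χ = X² − tr(λ)X + n(λ) ∈ ℝ[X]`. It is central in `ℍ[X]`, and `f′` vanishes at both `λ` and
`λ̄`, so the remainder of `f′` modulo `χ`, of degree at most one, is zero: `f′ = χ·q`. Hence
`C_f′ = conj(f′)·f + conj(f)·f′ = (conj(q)·f + conj(f)·q)·χ` vanishes at `λ`. Since `C_f` has
real coefficients and `λ = ι z` for an embedding `ι : ℂ →ₐ[ℝ] ℍ`, the point `z` is a critical
point of the real polynomial `C_f`; Gauss–Lucas in `ℂ` puts `z` in the convex hull of its complex
roots, and the `ℝ`-linear map `ι` carries this hull into `ℍ`.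
-/

open scoped Quaternion

section CentralCoefficients

variable {R A : Type*} [CommSemiring R] [Semiring A] [Algebra R A]

theorem commute_map_algebraMap (q : R[X]) (p : A[X]) : Commute (q.map (algebraMap R A)) p := by
  induction q using Polynomial.induction_on' with
  | add q₁ q₂ h₁ h₂ => rw [Polynomial.map_add]; exact h₁.add_left h₂
  | monomial n r =>
    rw [map_monomial, ← C_mul_X_pow_eq_monomial, ← Polynomial.algebraMap_apply]
    exact (Algebra.commute_algebraMap_left r p).mul_left (commute_X_pow p n)

theorem eval_mul_map_algebraMap (p : A[X]) (q : R[X]) (x : A) :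
    eval x (p * q.map (algebraMap R A)) = eval x p * aeval x q := by
  rw [← eval_map_algebraMap q]
  exact eval₂_mul_noncomm _ _ fun k => by
    simpa only [coeff_map, RingHom.id_apply] using Algebra.commute_algebraMap_left _ _

end CentralCoefficients

theorem eq_zero_of_natDegree_le_one_of_eval_eq_zero {R : Type*} [Ring R] [NoZeroDivisors R]
    {p : R[X]} (hp : p.natDegree ≤ 1) {x y : R} (hxy : x ≠ y)
    (hx : p.eval x = 0) (hy : p.eval y = 0) : p = 0 := by
  rw [eq_X_add_C_of_natDegree_le_one hp] at hx hy ⊢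
  simp only [eval_add, eval_C_mul, eval_X, eval_C] at hx hy
  have h₁ : p.coeff 1 * (x - y) = 0 := by
    rw [mul_sub, sub_eq_zero]
    exact add_right_cancel (hx.trans hy.symm)
  have h₁ : p.coeff 1 = 0 := (mul_eq_zero.1 h₁).resolve_right (sub_ne_zero.2 hxy)
  have h₀ : p.coeff 0 = 0 := by simpa [h₁] using hx
  simp [h₁, h₀]

namespace Quaternion

noncomputable def realCharPoly (a : ℍ) : ℝ[X] :=
  X ^ 2 - C (2 * a.re) * X + C (normSq a)

theorem realCharPoly_monic (a : ℍ) : (realCharPoly a).Monic := by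
  unfold realCharPoly; monicity!

theorem natDegree_realCharPoly (a : ℍ) : (realCharPoly a).natDegree = 2 := by
  unfold realCharPoly; compute_degree!

theorem aeval_realCharPoly (a x : ℍ) :
    aeval x (realCharPoly a) = x ^ 2 - (2 * a.re) • x + ((normSq a : ℝ) : ℍ) := by
  simp [realCharPoly, Algebra.smul_def, algebraMap_def]

theorem realCharPoly_star (a : ℍ) : realCharPoly (star a) = realCharPoly a := by
  rw [realCharPoly, re_star, normSq_star, realCharPoly]

theorem aeval_self_realCharPoly (a : ℍ) : aeval a (realCharPoly a) = 0 := by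
  rw [aeval_realCharPoly, ← coe_mul_eq_smul, ← Quaternion.self_add_star',
    ← Quaternion.star_mul_self, sq]
  noncomm_ring

theorem aeval_star_realCharPoly (a : ℍ) : aeval (star a) (realCharPoly a) = 0 := by
  rw [← realCharPoly_star, aeval_self_realCharPoly]

theorem im_ne_zero_of_notMem_range {a : ℍ} (ha : a ∉ Set.range (algebraMap ℝ ℍ)) :
    a.im ≠ 0 :=
  fun h => ha ⟨a.re, by simpa [h] using re_add_im a⟩

theorem star_ne_self_of_notMem_range {a : ℍ} (ha : a ∉ Set.range (algebraMap ℝ ℍ)) :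
    star a ≠ a :=
  fun h => ha ⟨a.re, (star_eq_self.1 h).symm⟩

theorem exists_algHom_complex_apply_eq {a : ℍ} (ha : a.im ≠ 0) :
    ∃ (ι : ℂ →ₐ[ℝ] ℍ) (z : ℂ), ι z = a := by
  have hn : ‖a.im‖ ≠ 0 := norm_ne_zero_iff.2 ha
  have hu : (‖a.im‖⁻¹ • a.im) * (‖a.im‖⁻¹ • a.im) = -1 := by
    rw [smul_mul_smul_comm, ← sq a.im, im_sq, normSq_eq_norm_mul_self, smul_neg, smul_coe]
    field_simp
    simp
  refine ⟨Complex.liftAux _ hu, ⟨a.re, ‖a.im‖⟩, ?_⟩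
  rw [Complex.liftAux_apply, smul_smul, mul_inv_cancel₀ hn, one_smul, algebraMap_def, re_add_im]

end Quaternion

theorem coeff_polyConj (f : Polynomial ℍ) (n : ℕ) : (polyConj f).coeff n = star (f.coeff n) := by
  rw [polyConj, Polynomial.sum, finsetSum_coeff]
  simp only [coeff_C_mul, coeff_X_pow, mul_ite, mul_one, mul_zero]
  rw [Finset.sum_ite_eq]
  split_ifs with hn
  · rfl
  · rw [notMem_support_iff.1 hn, star_zero]

theorem polyConj_polyConj (f : Polynomial ℍ) : polyConj (polyConj f) = f :=
  ext fun n => by rw [coeff_polyConj, coeff_polyConj, star_star]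

theorem support_polyConj (f : Polynomial ℍ) : (polyConj f).support = f.support := by
  ext n
  simp [coeff_polyConj]

theorem natDegree_polyConj (f : Polynomial ℍ) : (polyConj f).natDegree = f.natDegree := by
  simp only [natDegree, degree, support_polyConj]

theorem polyConj_eq_zero {f : Polynomial ℍ} : polyConj f = 0 ↔ f = 0 := by
  simp only [← support_eq_empty, support_polyConj]

theorem polyConj_mul (p q : Polynomial ℍ) : polyConj (p * q) = polyConj q * polyConj p := by
  refine ext fun n => ?_
  rw [coeff_polyConj, coeff_mul, coeff_mul, star_sum, ← Finset.Nat.sum_antidiagonal_swap]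
  simp only [Prod.fst_swap, Prod.snd_swap, star_mul, coeff_polyConj]

theorem polyConj_map_algebraMap (q : ℝ[X]) :
    polyConj (q.map (algebraMap ℝ ℍ)) = q.map (algebraMap ℝ ℍ) :=
  ext fun n => by rw [coeff_polyConj, coeff_map, Quaternion.algebraMap_def, Quaternion.star_coe]

theorem derivative_polyConj (f : Polynomial ℍ) :
    derivative (polyConj f) = polyConj (derivative f) := by
  refine ext fun n => ?_
  rw [coeff_derivative, coeff_polyConj, coeff_polyConj, coeff_derivative, star_mul,
    ← Nat.cast_succ, star_natCast, Nat.cast_comm]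

theorem polyConj_companion (f : Polynomial ℍ) : polyConj (companion f) = companion f := by
  rw [companion, polyConj_mul, polyConj_polyConj]

theorem companion_mem_lifts (f : Polynomial ℍ) : companion f ∈ lifts (algebraMap ℝ ℍ) := by
  refine (lifts_iff_coeff_lifts _).2 fun n => ⟨((companion f).coeff n).re, ?_⟩
  rw [Quaternion.algebraMap_def]
  exact (Quaternion.star_eq_self.1 (by rw [← coeff_polyConj, polyConj_companion])).symm

theorem natDegree_companion (f : Polynomial ℍ) : (companion f).natDegree = 2 * f.natDegree := by
  rcases eq_or_ne f 0 with rfl | hf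
  · simp [companion]
  · rw [companion, natDegree_mul (polyConj_eq_zero.not.2 hf) hf, natDegree_polyConj, two_mul]

theorem derivative_companion (f : Polynomial ℍ) :
    derivative (companion f) = polyConj (derivative f) * f + polyConj f * derivative f := by
  rw [companion, derivative_mul, derivative_polyConj]

namespace SphericalRoot

open Quaternion

variable {p : Polynomial ℍ} {lam : ℍ}

theorem eval_eq_zero (h : SphericalRoot p lam) {x : ℍ} (hx : aeval x (realCharPoly lam) = 0) :
    p.eval x = 0 :=
  h.2 x (by rwa [aeval_realCharPoly] at hx)

theorem map_realCharPoly_dvd (h : SphericalRoot p lam) :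
    (realCharPoly lam).map (algebraMap ℝ ℍ) ∣ p := by
  set χ := (realCharPoly lam).map (algebraMap ℝ ℍ)
  have hχ : χ.Monic := (realCharPoly_monic lam).map _
  have hχ₂ : χ.natDegree = 2 := by
    rw [natDegree_map, natDegree_realCharPoly]
  have hrem : ∀ x, aeval x (realCharPoly lam) = 0 → (p %ₘ χ).eval x = 0 := fun x hx => by
    have := h.eval_eq_zero hx
    rwa [← modByMonic_add_div p χ, eval_add, (commute_map_algebraMap _ _).eq,
      eval_mul_map_algebraMap, hx, mul_zero, add_zero] at this
  have hdeg : (p %ₘ χ).natDegree ≤ 1 := by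
    have := natDegree_modByMonic_lt p hχ (fun h1 => by simp [h1] at hχ₂)
    omega
  refine (modByMonic_eq_zero_iff_dvd hχ).1 <|
    eq_zero_of_natDegree_le_one_of_eval_eq_zero hdeg (star_ne_self_of_notMem_range h.1)
      (hrem _ (aeval_star_realCharPoly lam)) (hrem _ (aeval_self_realCharPoly lam))

theorem eval_derivative_companion {f : Polynomial ℍ} (h : SphericalRoot (derivative f) lam) :
    (derivative (companion f)).eval lam = 0 := by
  obtain ⟨q, hq⟩ := h.map_realCharPoly_dvd
  set χ := (realCharPoly lam).map (algebraMap ℝ ℍ)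
  have hχ : ∀ p, χ * p = p * χ := fun p => (commute_map_algebraMap _ p).eq
  have : derivative (companion f) = (polyConj q * f + polyConj f * q) * χ := by
    rw [derivative_companion, hq, polyConj_mul, polyConj_map_algebraMap, add_mul, mul_assoc,
      hχ f, hχ q, mul_assoc, mul_assoc]
  rw [this, eval_mul_map_algebraMap, aeval_self_realCharPoly, mul_zero]

end SphericalRoot

/-- Gauss–Lucas for a real polynomial, read inside any copy of `ℂ` in a real algebra. -/
theorem AlgHom.apply_mem_convexHull_of_aeval_derivative_eq_zero {A : Type*} [Ring A]
    [Algebra ℝ A] [Nontrivial A] (ι : ℂ →ₐ[ℝ] A) {g : ℝ[X]} (hg : 0 < g.degree) {z : ℂ}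
    (hz : aeval (ι z) (derivative g) = 0) :
    ι z ∈ convexHull ℝ {x : A | aeval x g = 0} := by
  set P := g.map (algebraMap ℝ ℂ)
  have hP : 0 < P.degree := by rwa [degree_map]
  have hzP : z ∈ P.derivative.rootSet ℂ := by
    refine mem_rootSet.2 ⟨derivative_ne_zero.2 (natDegree_pos_iff_degree_pos.2 hP).ne', ?_⟩
    rw [aeval_algHom_apply] at hz
    rw [derivative_map, aeval_map_algebraMap]
    exact ι.toRingHom.injective (by simpa using hz)
  have hmaps : ι.toLinearMap '' P.rootSet ℂ ⊆ {x : A | aeval x g = 0} := by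
    rintro - ⟨w, hw, rfl⟩
    rw [mem_rootSet, aeval_map_algebraMap] at hw
    simp [aeval_algHom_apply, hw.2]
  refine convexHull_mono hmaps ?_
  rw [← LinearMap.image_convexHull]
  exact ⟨z, rootSet_derivative_subset_convexHull_rootSet hP hzP, rfl⟩

theorem spherical_critical_points_mem_convexHull_roots_of_companion
    (f : Polynomial (Quaternion ℝ)) (hdeg : 1 ≤ f.natDegree)
    (lam : Quaternion ℝ) (h : SphericalRoot (derivative f) lam) :
    lam ∈ convexHull ℝ {r : Quaternion ℝ | Polynomial.eval r (companion f) = 0} := by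
  obtain ⟨g, hg⟩ := (mem_lifts _).1 (companion_mem_lifts f)
  obtain ⟨ι, z, rfl⟩ := Quaternion.exists_algHom_complex_apply_eq
    (Quaternion.im_ne_zero_of_notMem_range h.1)
  have hgdeg : 0 < g.degree := by
    rw [← degree_map_eq_of_injective (algebraMap ℝ ℍ).injective, hg,
      ← natDegree_pos_iff_degree_pos, natDegree_companion]
    omega
  simp only [← hg, eval_map_algebraMap]
  refine ι.apply_mem_convexHull_of_aeval_derivative_eq_zero hgdeg ?_
  rw [← eval_map_algebraMap, ← derivative_map, hg]
  exact h.eval_derivative_companion
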